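/- arXiv:2601.19691 — 4 statements merged into one kernel-verified Lean document; each statement's English description precedes it below -/
import Mathlib

section
/- For every element $x = w t_\lambda$ of the extended affine Weyl group $\widetilde{W} = W \ltimes \Lambda$ and every $u \in W$, one has $\ell(x) - \ell_P(u) + \ell_P(wu) + \langle 2\rho_P, u^{-1}(\lambda) \rangle \ge 0$. -/
/-!
Every `α ∈ R⁺ \ R_P⁺` contributes `⟨u(α), λ⟩ + χ(wu(α) < 0) - χ(u(α) < 0)` to
`⟨2ρ_P, u⁻¹(λ)⟩ + ℓ_P(wu) - ℓ_P(u)`. Writing `c(β) = ⟨β, λ⟩ + χ(w(β) < 0)` for the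
Iwahori–Matsumoto coefficient, one has `c(-β) = 1 - c(β)` on `R`, so this contribution equals
`±c(β)` for the positive root `β = ±u(α)`, hence is at least `-|c(β)|`. Since `α ↦ ±u(α)` is
injective on `R⁺`, these lower bounds add up to at least `-ℓ(w t_λ)`.

Below, `negInd Rpos β = χ(β ∈ R⁻)` (with `β ∈ R⁻` encoded as `-β ∈ R⁺`), `imCoeff` is `c`, and
`posRoot Rpos β` is whichever of `±β` lies in `R⁺`.
-/

open Finset

/-- The Iwahori–Matsumoto length of the element `w t_λ` of the extended affine Weyl group:
`ℓ(w t_λ) = ∑_{α ∈ R⁺} |⟨α, λ⟩ + χ(w(α) ∈ R⁻)|`. -/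
noncomputable def affLen {E : Type*} [AddCommGroup E] [Module ℚ E] [DecidableEq E]
    (Rpos : Finset E) (w : E ≃ₗ[ℚ] E) (lam : E →ₗ[ℚ] ℚ) : ℚ :=
  ∑ α ∈ Rpos, |lam α + (if -(w α) ∈ Rpos then 1 else 0)|

/-- `ℓ_P(u) = #{α ∈ R⁺ \ R_P⁺ : u(α) ∈ R⁻}`, the length of the minimal length
representative of `u W_P`. -/
def lenP {E : Type*} [AddCommGroup E] [Module ℚ E] [DecidableEq E]
    (Rpos RP : Finset E) (u : E ≃ₗ[ℚ] E) : ℕ :=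
  ((Rpos \ RP).filter fun α => -(u α) ∈ Rpos).card

namespace AffineWeylLength

variable {E : Type*} [AddCommGroup E] [DecidableEq E] {R Rpos : Finset E}

def negInd (Rpos : Finset E) (β : E) : ℚ := if -β ∈ Rpos then 1 else 0

def posRoot (Rpos : Finset E) (β : E) : E := if -β ∈ Rpos then -β else β

theorem negInd_add_negInd_neg (hsplit : ∀ α : E, α ∈ R ↔ (α ∈ Rpos ∨ -α ∈ Rpos))
    (hdisj : ∀ α ∈ Rpos, -α ∉ Rpos) {γ : E} (hγ : γ ∈ R) :
    negInd Rpos γ + negInd Rpos (-γ) = 1 := by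
  unfold negInd
  rw [neg_neg]
  rcases (hsplit γ).1 hγ with hpos | hneg
  · simp [hpos, hdisj γ hpos]
  · have hγ_not_pos : γ ∉ Rpos := by simpa using hdisj (-γ) hneg
    simp [hneg, hγ_not_pos]

theorem posRoot_mem (hsplit : ∀ α : E, α ∈ R ↔ (α ∈ Rpos ∨ -α ∈ Rpos)) {β : E}
    (hβ : β ∈ R) : posRoot Rpos β ∈ Rpos := by
  unfold posRoot
  split_ifs with hneg
  · exact hneg
  · exact ((hsplit β).1 hβ).resolve_right hneg

theorem eq_or_eq_neg_of_posRoot_eq {β γ : E} (h : posRoot Rpos β = posRoot Rpos γ) :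
    β = γ ∨ β = -γ := by
  unfold posRoot at h
  split_ifs at h
  · exact Or.inl (neg_inj.mp h)
  · exact Or.inr (neg_eq_iff_eq_neg.mp h)
  · exact Or.inr h
  · exact Or.inl h

variable [Module ℚ E]

def imCoeff (Rpos : Finset E) (w : E ≃ₗ[ℚ] E) (lam : E →ₗ[ℚ] ℚ) (β : E) : ℚ :=
  lam β + negInd Rpos (w β)

theorem affLen_eq_sum_abs_imCoeff (w : E ≃ₗ[ℚ] E) (lam : E →ₗ[ℚ] ℚ) :
    affLen Rpos w lam = ∑ β ∈ Rpos, |imCoeff Rpos w lam β| := rfl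

theorem lenP_eq_sum_negInd (RP : Finset E) (u : E ≃ₗ[ℚ] E) :
    (lenP Rpos RP u : ℚ) = ∑ α ∈ Rpos \ RP, negInd Rpos (u α) := by
  rw [lenP, card_filter]
  push_cast
  rfl

theorem imCoeff_neg (hsplit : ∀ α : E, α ∈ R ↔ (α ∈ Rpos ∨ -α ∈ Rpos))
    (hdisj : ∀ α ∈ Rpos, -α ∉ Rpos) {w : E ≃ₗ[ℚ] E} (hw : ∀ α ∈ R, w α ∈ R)
    (lam : E →ₗ[ℚ] ℚ) {β : E} (hβ : β ∈ R) :
    imCoeff Rpos w lam (-β) = 1 - imCoeff Rpos w lam β := by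
  have := negInd_add_negInd_neg hsplit hdisj (hw β hβ)
  simp only [imCoeff, map_neg]
  linarith

theorem neg_abs_imCoeff_posRoot_le (hsplit : ∀ α : E, α ∈ R ↔ (α ∈ Rpos ∨ -α ∈ Rpos))
    (hdisj : ∀ α ∈ Rpos, -α ∉ Rpos) {w : E ≃ₗ[ℚ] E} (hw : ∀ α ∈ R, w α ∈ R)
    (lam : E →ₗ[ℚ] ℚ) {β : E} (hβ : β ∈ R) :
    -|imCoeff Rpos w lam (posRoot Rpos β)| ≤ imCoeff Rpos w lam β - negInd Rpos β := by
  by_cases hneg : -β ∈ Rpos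
  · have hflip := imCoeff_neg hsplit hdisj hw lam hβ
    simp only [posRoot, negInd, hneg, if_true] at hflip ⊢
    linarith [le_abs_self (imCoeff Rpos w lam (-β))]
  · simpa [posRoot, negInd, hneg] using neg_abs_le (imCoeff Rpos w lam β)

theorem injOn_posRoot_comp (hdisj : ∀ α ∈ Rpos, -α ∉ Rpos) (u : E ≃ₗ[ℚ] E) :
    Set.InjOn (fun α => posRoot Rpos (u α)) Rpos := by
  intro α hα α' hα' h
  rcases eq_or_eq_neg_of_posRoot_eq h with heq | heq
  · exact u.injective heq
  · rw [← map_neg] at heq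
    obtain rfl := u.injective heq
    exact absurd hα (hdisj α' hα')

theorem sum_abs_imCoeff_posRoot_le_affLen (hsplit : ∀ α : E, α ∈ R ↔ (α ∈ Rpos ∨ -α ∈ Rpos))
    (hdisj : ∀ α ∈ Rpos, -α ∉ Rpos) {u : E ≃ₗ[ℚ] E} (hu : ∀ α ∈ R, u α ∈ R)
    (w : E ≃ₗ[ℚ] E) (lam : E →ₗ[ℚ] ℚ) {s : Finset E} (hs : s ⊆ Rpos) :
    ∑ α ∈ s, |imCoeff Rpos w lam (posRoot Rpos (u α))| ≤ affLen Rpos w lam := by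
  have hRpos_sub : ∀ α ∈ Rpos, α ∈ R := fun α h => (hsplit α).2 (Or.inl h)
  rw [affLen_eq_sum_abs_imCoeff, ← sum_image (f := fun β => |imCoeff Rpos w lam β|)
    ((injOn_posRoot_comp hdisj u).mono (coe_subset.mpr hs))]
  refine sum_le_sum_of_subset_of_nonneg ?_ fun _ _ _ => abs_nonneg _
  intro β hβ
  obtain ⟨α, hα, rfl⟩ := mem_image.mp hβ
  exact posRoot_mem hsplit (hu α (hRpos_sub α (hs hα)))

end AffineWeylLength

open AffineWeylLength in
theorem stmt0_general {E : Type*} [AddCommGroup E] [Module ℚ E] [DecidableEq E]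
    (R Rpos RP : Finset E)
    (hsplit : ∀ α : E, α ∈ R ↔ (α ∈ Rpos ∨ -α ∈ Rpos))
    (hdisj : ∀ α ∈ Rpos, -α ∉ Rpos)
    (w u : E ≃ₗ[ℚ] E)
    (hw : ∀ α ∈ R, w α ∈ R) (hu : ∀ α ∈ R, u α ∈ R)
    (lam : E →ₗ[ℚ] ℚ) :
    0 ≤ affLen Rpos w lam - (lenP Rpos RP u : ℚ) + (lenP Rpos RP (u.trans w) : ℚ)
        + ∑ α ∈ Rpos \ RP, lam (u α) := by
  have hsub : Rpos \ RP ⊆ Rpos := sdiff_subset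
  have hcontrib : ∀ α ∈ Rpos \ RP, -|imCoeff Rpos w lam (posRoot Rpos (u α))|
      ≤ imCoeff Rpos w lam (u α) - negInd Rpos (u α) := fun α hα =>
    neg_abs_imCoeff_posRoot_le hsplit hdisj hw lam (hu α ((hsplit α).2 (Or.inl (hsub hα))))
  have hsum := sum_le_sum hcontrib
  rw [sum_neg_distrib, sum_sub_distrib] at hsum
  have himCoeff_sum : ∑ α ∈ Rpos \ RP, imCoeff Rpos w lam (u α)
      = ∑ α ∈ Rpos \ RP, lam (u α) + ∑ α ∈ Rpos \ RP, negInd Rpos (w (u α)) := sum_add_distrib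
  have hbound := sum_abs_imCoeff_posRoot_le_affLen hsplit hdisj hu w lam hsub
  rw [lenP_eq_sum_negInd, lenP_eq_sum_negInd]
  simp only [LinearEquiv.trans_apply]
  linarith

/-- For every `x = w t_λ ∈ 𝑊̃ = W ⋉ Λ` and every `u ∈ W`,
`ℓ(x) - ℓ_P(u) + ℓ_P(wu) + ⟨2ρ_P, u⁻¹(λ)⟩ ≥ 0`. -/
theorem stmt0 {E : Type*} [AddCommGroup E] [Module ℚ E] [DecidableEq E]
    (R Rpos RP : Finset E)
    (hspan : Submodule.span ℚ (R : Set E) = ⊤)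
    (hsplit : ∀ α : E, α ∈ R ↔ (α ∈ Rpos ∨ -α ∈ Rpos))
    (hdisj : ∀ α ∈ Rpos, -α ∉ Rpos)
    (hRP : RP ⊆ R) (hRPneg : ∀ α ∈ RP, -α ∈ RP)
    (w u : E ≃ₗ[ℚ] E)
    (hw : ∀ α ∈ R, w α ∈ R) (hu : ∀ α ∈ R, u α ∈ R)
    (lam : E →ₗ[ℚ] ℚ)
    (hlam : ∀ α ∈ R, ∃ n : ℤ, lam α = (n : ℚ)) :
    0 ≤ affLen Rpos w lam - (lenP Rpos RP u : ℚ) + (lenP Rpos RP (u.trans w) : ℚ)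
        + ∑ α ∈ Rpos \ RP, lam (u α) :=
  stmt0_general R Rpos RP hsplit hdisj w u hw hu lam
end

section
/- For an element $x = w t_\lambda$ of the extended affine Weyl group $\widetilde{W} = W \ltimes \Lambda$ and $u \in W$, the equality $\ell(x) - \ell_P(u) + \ell_P(wu) + \langle 2\rho_P, u^{-1}(\lambda) \rangle = 0$ holds if and only if the pair $(x, u)$ is $P$-allowed. -/
/-!
Setting: a finite reduced crystallographic root system `R` with positive roots `Rpos`
in a rational vector space `E`, a parabolic subset `RP = R_P`, elements `w, u` of the
Weyl group (linear automorphisms preserving `R`), and an integral coweight `lam`.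
Membership `β ∈ R⁻` is encoded by `-β ∈ Rpos`.
-/

open Finset

/-- The pair `(x, u) = (w t_λ, u)` is `P`-allowed. -/
def PAllowedPair {E : Type*} [AddCommGroup E] [Module ℚ E]
    (Rpos RP : Finset E) (w u : E ≃ₗ[ℚ] E) (lam : E →ₗ[ℚ] ℚ) : Prop :=
  (∀ α ∈ Rpos, α ∉ RP →
    (((u α ∈ Rpos ∧ w (u α) ∈ Rpos) ∨ (-(u α) ∈ Rpos ∧ -(w (u α)) ∈ Rpos)) →
        lam (u α) ≤ 0) ∧
    ((-(u α) ∈ Rpos ∧ w (u α) ∈ Rpos) → lam (u α) ≤ 1) ∧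
    ((u α ∈ Rpos ∧ -(w (u α)) ∈ Rpos) → lam (u α) ≤ -1)) ∧
  (∀ α ∈ Rpos, (∃ β ∈ RP, u β = α) →
    (w α ∈ Rpos → lam α = 0) ∧ (-(w α) ∈ Rpos → lam α = -1))

/-!
Put `d(β) = ⟨β, λ⟩ - χ(β < 0) + χ(wβ < 0)`. On roots `d` is odd, so `|d|` is even and the
Iwahori–Matsumoto sum `ℓ(x) = ∑_{β > 0} |d(β)|` can be reindexed through `u` as
`∑_{α > 0} |d(uα)|`. The remaining terms `-ℓ_P(u) + ℓ_P(wu) + ⟨2ρ_P, u⁻¹λ⟩` add up to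
`∑_{α ∈ R⁺ ∖ R_P} d(uα)`, so the left-hand side is
`∑_{α ∈ R_P⁺} |d(uα)| + ∑_{α ∈ R⁺ ∖ R_P} (d(uα) + |d(uα)|)`, a sum of nonnegative terms.
It vanishes iff `d(uα) = 0` on `R_P⁺` and `d(uα) ≤ 0` off `R_P`; sorting by the signs of `uα`
and `wuα` (and using oddness to pass from `R_P⁺` to `R⁺ ∩ u(R_P)`), this is `P`-allowedness.
-/

theorem add_abs_eq_zero_iff {α : Type*} [AddCommGroup α] [LinearOrder α] [IsOrderedAddMonoid α]
    (a : α) : a + |a| = 0 ↔ a ≤ 0 := by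
  rw [add_eq_zero_iff_neg_eq, eq_comm, abs_eq_neg_self]

section RootSigns

variable {E : Type*} [AddCommGroup E]

structure IsPosNegSplit (R Rpos : Finset E) : Prop where
  mem_iff : ∀ α, α ∈ R ↔ α ∈ Rpos ∨ -α ∈ Rpos
  neg_notMem : ∀ α ∈ Rpos, -α ∉ Rpos

def negInd [DecidableEq E] (Rpos : Finset E) (β : E) : ℚ := if -β ∈ Rpos then 1 else 0

namespace IsPosNegSplit

variable {R Rpos : Finset E} (hs : IsPosNegSplit R Rpos)
include hs

theorem mem_of_pos {α : E} (hα : α ∈ Rpos) : α ∈ R := (hs.mem_iff α).2 (.inl hα)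

theorem mem_pos_or_neg {β : E} (hβ : β ∈ R) :
    (β ∈ Rpos ∧ -β ∉ Rpos) ∨ (-β ∈ Rpos ∧ β ∉ Rpos) := by
  rcases (hs.mem_iff β).1 hβ with h | h
  · exact .inl ⟨h, hs.neg_notMem β h⟩
  · exact .inr ⟨h, by simpa using hs.neg_notMem _ h⟩

theorem sum_eq_two_mul_sum_pos [DecidableEq E] {f : E → ℚ} (hf : ∀ β ∈ R, f (-β) = f β) :
    ∑ β ∈ R, f β = 2 * ∑ β ∈ Rpos, f β := by
  have hR : R = Rpos ∪ Rpos.image Neg.neg := by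
    ext β
    simp [hs.mem_iff β, neg_eq_iff_eq_neg]
  have hdisj : Disjoint Rpos (Rpos.image Neg.neg) := by
    simp only [Finset.disjoint_left, Finset.mem_image, not_exists, not_and]
    rintro β hβ γ hγ rfl
    exact hs.neg_notMem γ hγ hβ
  rw [hR, Finset.sum_union hdisj, Finset.sum_image fun _ _ _ _ h => neg_injective h,
    Finset.sum_congr rfl fun β hβ => hf β (hs.mem_of_pos hβ)]
  ring

theorem sum_pos_comp_eq [DecidableEq E] {F : Type*} [EquivLike F E E] [AddEquivClass F E E]
    (u : F) (hu : ∀ α ∈ R, u α ∈ R) {f : E → ℚ} (hf : ∀ β ∈ R, f (-β) = f β) :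
    ∑ α ∈ Rpos, f (u α) = ∑ β ∈ Rpos, f β := by
  have huR : R.image u = R :=
    Finset.eq_of_subset_of_card_le (Finset.image_subset_iff.2 hu)
      (Finset.card_image_of_injective _ (EquivLike.injective u)).ge
  have := hs.sum_eq_two_mul_sum_pos (f := fun α => f (u α))
    fun α hα => by rw [map_neg, hf _ (hu α hα)]
  rw [← Finset.sum_image fun _ _ _ _ h => EquivLike.injective u h, huR,
    hs.sum_eq_two_mul_sum_pos hf] at this
  linarith

variable [DecidableEq E]

theorem negInd_of_pos {β : E} (hβ : β ∈ Rpos) : negInd Rpos β = 0 :=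
  if_neg (hs.neg_notMem β hβ)

theorem negInd_neg {β : E} (hβ : β ∈ R) : negInd Rpos (-β) = 1 - negInd Rpos β := by
  rcases hs.mem_pos_or_neg hβ with ⟨h, h'⟩ | ⟨h, h'⟩ <;> simp [negInd, h, h']

end IsPosNegSplit

end RootSigns

section Defect

variable {E : Type*} [AddCommGroup E] [Module ℚ E] [DecidableEq E] {R Rpos RP : Finset E}
  {w u : E ≃ₗ[ℚ] E} {lam : E →ₗ[ℚ] ℚ}

def defect (Rpos : Finset E) (w : E ≃ₗ[ℚ] E) (lam : E →ₗ[ℚ] ℚ) (β : E) : ℚ :=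
  lam β - negInd Rpos β + negInd Rpos (w β)

theorem lenP_eq_sum_negInd (Rpos RP : Finset E) (v : E ≃ₗ[ℚ] E) :
    (lenP Rpos RP v : ℚ) = ∑ α ∈ Rpos \ RP, negInd Rpos (v α) := by
  rw [lenP, Finset.natCast_card_filter]
  rfl

namespace IsPosNegSplit

variable (hs : IsPosNegSplit R Rpos)
include hs

theorem defect_neg {β : E} (hβ : β ∈ R) (hwβ : w β ∈ R) :
    defect Rpos w lam (-β) = -defect Rpos w lam β := by
  simp only [defect, map_neg, hs.negInd_neg hβ, hs.negInd_neg hwβ]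
  ring

theorem affLen_eq_sum_abs_defect (hw : ∀ α ∈ R, w α ∈ R) (hu : ∀ α ∈ R, u α ∈ R) :
    affLen Rpos w lam = ∑ α ∈ Rpos, |defect Rpos w lam (u α)| := by
  calc affLen Rpos w lam = ∑ β ∈ Rpos, |defect Rpos w lam β| :=
        Finset.sum_congr rfl fun β hβ => by rw [defect, hs.negInd_of_pos hβ, sub_zero]; rfl
    _ = _ := (hs.sum_pos_comp_eq u hu fun β hβ => by
        rw [hs.defect_neg hβ (hw β hβ), abs_neg]).symm

theorem affLen_sub_lenP_add_lenP_add_sum (hw : ∀ α ∈ R, w α ∈ R) (hu : ∀ α ∈ R, u α ∈ R) :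
    affLen Rpos w lam - lenP Rpos RP u + lenP Rpos RP (u.trans w) + ∑ α ∈ Rpos \ RP, lam (u α)
      = ∑ α ∈ Rpos ∩ RP, |defect Rpos w lam (u α)|
        + ∑ α ∈ Rpos \ RP, (defect Rpos w lam (u α) + |defect Rpos w lam (u α)|) := by
  rw [hs.affLen_eq_sum_abs_defect hw hu, lenP_eq_sum_negInd, lenP_eq_sum_negInd,
    ← Finset.sum_inter_add_sum_sdiff Rpos RP]
  simp only [defect, Finset.sum_add_distrib, Finset.sum_sub_distrib, LinearEquiv.trans_apply]
  ring

theorem defect_nonpos_iff {β : E} (hβ : β ∈ R) (hwβ : w β ∈ R) :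
    defect Rpos w lam β ≤ 0 ↔
      (((β ∈ Rpos ∧ w β ∈ Rpos) ∨ (-β ∈ Rpos ∧ -(w β) ∈ Rpos)) → lam β ≤ 0) ∧
      (-β ∈ Rpos → w β ∈ Rpos → lam β ≤ 1) ∧
      (β ∈ Rpos → -(w β) ∈ Rpos → lam β ≤ -1) := by
  rcases hs.mem_pos_or_neg hβ with ⟨h1, h1'⟩ | ⟨h1, h1'⟩ <;>
  rcases hs.mem_pos_or_neg hwβ with ⟨h2, h2'⟩ | ⟨h2, h2'⟩ <;>
  simp [defect, negInd, h1, h1', h2, h2', ← le_neg_iff_add_nonpos_right]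

theorem defect_eq_zero_iff_of_pos {β : E} (hβ : β ∈ Rpos) (hwβ : w β ∈ R) :
    defect Rpos w lam β = 0 ↔ (w β ∈ Rpos → lam β = 0) ∧ (-(w β) ∈ Rpos → lam β = -1) := by
  rcases hs.mem_pos_or_neg hwβ with ⟨h2, h2'⟩ | ⟨h2, h2'⟩ <;>
  simp [defect, negInd, hs.neg_notMem β hβ, h2, h2', ← eq_neg_iff_add_eq_zero]

theorem forall_image_defect_eq_zero_iff (hRP : RP ⊆ R) (hRPneg : ∀ α ∈ RP, -α ∈ RP)
    (hw : ∀ α ∈ R, w α ∈ R) (hu : ∀ α ∈ R, u α ∈ R) :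
    (∀ γ ∈ Rpos, (∃ β ∈ RP, u β = γ) → defect Rpos w lam γ = 0) ↔
      ∀ α ∈ Rpos ∩ RP, defect Rpos w lam (u α) = 0 := by
  have hodd : ∀ β ∈ RP, defect Rpos w lam (u (-β)) = -defect Rpos w lam (u β) := fun β hβ => by
    rw [map_neg, hs.defect_neg (hu β (hRP hβ)) (hw _ (hu β (hRP hβ)))]
  constructor
  · intro h α hα
    obtain ⟨-, hαP⟩ := Finset.mem_inter.1 hα
    rcases hs.mem_pos_or_neg (hu α (hRP hαP)) with ⟨hpos, -⟩ | ⟨hneg, -⟩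
    · exact h _ hpos ⟨α, hαP, rfl⟩
    · have := h _ hneg ⟨-α, hRPneg α hαP, map_neg u α⟩
      rwa [← map_neg, hodd α hαP, neg_eq_zero] at this
  · rintro h γ - ⟨β, hβ, rfl⟩
    rcases hs.mem_pos_or_neg (hRP hβ) with ⟨hpos, -⟩ | ⟨hneg, -⟩
    · exact h β (Finset.mem_inter.2 ⟨hpos, hβ⟩)
    · have := h (-β) (Finset.mem_inter.2 ⟨hneg, hRPneg β hβ⟩)
      rwa [hodd β hβ, neg_eq_zero] at this

theorem pAllowedPair_iff (hRP : RP ⊆ R) (hRPneg : ∀ α ∈ RP, -α ∈ RP)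
    (hw : ∀ α ∈ R, w α ∈ R) (hu : ∀ α ∈ R, u α ∈ R) :
    PAllowedPair Rpos RP w u lam ↔
      (∀ α ∈ Rpos \ RP, defect Rpos w lam (u α) ≤ 0) ∧
        ∀ α ∈ Rpos ∩ RP, defect Rpos w lam (u α) = 0 := by
  refine and_congr ?_ ?_
  · simp only [Finset.mem_sdiff, and_imp]
    refine forall₂_congr fun α hα => imp_congr_right fun _ => ?_
    have huα := hu α (hs.mem_of_pos hα)
    exact (hs.defect_nonpos_iff huα (hw _ huα)).symm
  · rw [← hs.forall_image_defect_eq_zero_iff hRP hRPneg hw hu]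
    refine forall₂_congr fun γ hγ => imp_congr_right fun _ => ?_
    exact (hs.defect_eq_zero_iff_of_pos hγ (hw _ (hs.mem_of_pos hγ))).symm

end IsPosNegSplit

end Defect

theorem stmt1_general {E : Type*} [AddCommGroup E] [Module ℚ E] [DecidableEq E]
    (R Rpos RP : Finset E)
    (hsplit : ∀ α : E, α ∈ R ↔ (α ∈ Rpos ∨ -α ∈ Rpos))
    (hdisj : ∀ α ∈ Rpos, -α ∉ Rpos)
    (hRP : RP ⊆ R) (hRPneg : ∀ α ∈ RP, -α ∈ RP)
    (w u : E ≃ₗ[ℚ] E)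
    (hw : ∀ α ∈ R, w α ∈ R) (hu : ∀ α ∈ R, u α ∈ R)
    (lam : E →ₗ[ℚ] ℚ) :
    (affLen Rpos w lam - (lenP Rpos RP u : ℚ) + (lenP Rpos RP (u.trans w) : ℚ)
        + ∑ α ∈ Rpos \ RP, lam (u α) = 0)
      ↔ PAllowedPair Rpos RP w u lam := by
  have hs : IsPosNegSplit R Rpos := ⟨hsplit, hdisj⟩
  rw [hs.affLen_sub_lenP_add_lenP_add_sum hw hu, hs.pAllowedPair_iff hRP hRPneg hw hu,
    add_eq_zero_iff_of_nonneg (Finset.sum_nonneg fun _ _ => abs_nonneg _)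
      (Finset.sum_nonneg fun _ _ => add_abs_nonneg _),
    Finset.sum_eq_zero_iff_of_nonneg fun _ _ => abs_nonneg _,
    Finset.sum_eq_zero_iff_of_nonneg fun _ _ => add_abs_nonneg _]
  simp only [abs_eq_zero, add_abs_eq_zero_iff]
  exact and_comm

/-- For `x = w t_λ ∈ 𝑊̃` and `u ∈ W`, the equality
`ℓ(x) - ℓ_P(u) + ℓ_P(wu) + ⟨2ρ_P, u⁻¹(λ)⟩ = 0` holds if and only if `(x, u)` is `P`-allowed. -/
theorem stmt1 {E : Type*} [AddCommGroup E] [Module ℚ E] [DecidableEq E]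
    (R Rpos RP : Finset E)
    (hspan : Submodule.span ℚ (R : Set E) = ⊤)
    (hsplit : ∀ α : E, α ∈ R ↔ (α ∈ Rpos ∨ -α ∈ Rpos))
    (hdisj : ∀ α ∈ Rpos, -α ∉ Rpos)
    (hRP : RP ⊆ R) (hRPneg : ∀ α ∈ RP, -α ∈ RP)
    (w u : E ≃ₗ[ℚ] E)
    (hw : ∀ α ∈ R, w α ∈ R) (hu : ∀ α ∈ R, u α ∈ R)
    (lam : E →ₗ[ℚ] ℚ)
    (hlam : ∀ α ∈ R, ∃ n : ℤ, lam α = (n : ℚ)) :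
    (affLen Rpos w lam - (lenP Rpos RP u : ℚ) + (lenP Rpos RP (u.trans w) : ℚ)
        + ∑ α ∈ Rpos \ RP, lam (u α) = 0)
      ↔ PAllowedPair Rpos RP w u lam :=
  stmt1_general R Rpos RP hsplit hdisj hRP hRPneg w u hw hu lam
end

section
/- Let $x = w t_\lambda \in \widetilde{W}$ and $u \in W$. For each $\alpha \in R^+$ let $\alpha'$ denote the unique positive root among $\{u(\alpha), -u(\alpha)\}$, and define $g(\alpha) = |\langle u(\alpha), \lambda \rangle| + \chi(\alpha \notin R_P^+)\,\langle u(\alpha), \lambda \rangle + \chi(w(\alpha') \in R^- \text{ and } \langle \alpha', \lambda \rangle \ge 0) - \chi(w(\alpha') \in R^- \text{ and } \langle \alpha', \lambda \rangle < 0) - \chi(\alpha \in R^+ \setminus R_P^+ \text{ and } u(\alpha) \in R^-) + \chi(\alpha \in R^+ \setminus R_P^+ \text{ and } wu(\alpha) \in R^-)$. Then $\ell(x) - \ell_P(u) + \ell_P(wu) + \langle 2\rho_P, u^{-1}(\lambda) \rangle = \sum_{\alpha \in R^+} g(\alpha)$, and $g(\alpha) \ge 0$ for every $\alpha \in R^+$.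 -/
/-!
Setting: a finite reduced crystallographic root system `R` with positive roots `Rpos`
in a rational vector space `E`, a parabolic subset `RP = R_P`, elements `w, u` of the
Weyl group (linear automorphisms preserving `R`), and an integral coweight `lam`.
Membership `β ∈ R⁻` is encoded by `-β ∈ Rpos`.
-/

open Finset

/-- The summand `g(α)` associated with `x = w t_λ` and `u`.  Here `α'` is the unique
positive root among `{u(α), -u(α)}`, and each indicator `χ(⋯)` is an `if ⋯ then 1 else 0`. -/
noncomputable def gfun {E : Type*} [AddCommGroup E] [Module ℚ E] [DecidableEq E]
    (Rpos RP : Finset E) (w u : E ≃ₗ[ℚ] E) (lam : E →ₗ[ℚ] ℚ) (α : E) : ℚ :=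
  let β := u α
  let α' := if β ∈ Rpos then β else -β
  |lam β| + (if α ∉ RP then 1 else 0) * lam β
    + (if -(w α') ∈ Rpos ∧ 0 ≤ lam α' then 1 else 0)
    - (if -(w α') ∈ Rpos ∧ lam α' < 0 then 1 else 0)
    - (if α ∉ RP ∧ -β ∈ Rpos then 1 else 0)
    + (if α ∉ RP ∧ -(w β) ∈ Rpos then 1 else 0)

/-!
Write `α' = ±u(α)` for the positive representative and `a(γ) = ⟨γ, λ⟩ + χ(w(γ) ∈ R⁻)`.
For integral `λ`, `|a(γ)| = |⟨γ, λ⟩| + χ(w γ < 0 ∧ ⟨γ, λ⟩ ≥ 0) - χ(w γ < 0 ∧ ⟨γ, λ⟩ < 0)`,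
so `g(α) = |a(α')| + χ(α ∉ R_P) · (⟨u α, λ⟩ - χ(u α < 0) + χ(w u α < 0))`.
Since `α ↦ α'` permutes `R⁺`, the first terms sum to `ℓ(x)`, and the second ones sum to
`⟨2ρ_P, u⁻¹λ⟩ - ℓ_P(u) + ℓ_P(wu)`. As `w u α` is a root, the bracket equals `±a(α')`
(with sign `+` iff `u α > 0`), whence `g(α) ≥ |a(α')| - |a(α')| = 0`.
-/

theorem abs_add_ite_of_int (q : ℚ) (hq : ∃ n : ℤ, q = n) (b : Prop) [Decidable b] :
    |q + (if b then 1 else 0)| =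
      |q| + (if b ∧ 0 ≤ q then 1 else 0) - (if b ∧ q < 0 then 1 else 0) := by
  obtain ⟨n, rfl⟩ := hq
  have key : |n + (if b then 1 else 0)| =
      |n| + (if b ∧ 0 ≤ n then 1 else 0) - (if b ∧ n < 0 then 1 else 0) := by
    by_cases hb : b <;> simp only [hb, true_and, false_and, if_true, if_false, abs_eq_max_neg] <;>
      (try split_ifs) <;> omega
  exact_mod_cast key

section RootSigns

variable {E : Type*} [AddCommGroup E] [DecidableEq E] {R Rpos RP : Finset E}

/-- The `α'` of `gfun`: the positive root among `±β`. -/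
def posRep (Rpos : Finset E) (β : E) : E := if β ∈ Rpos then β else -β

theorem posRep_mem (hsplit : ∀ α : E, α ∈ R ↔ (α ∈ Rpos ∨ -α ∈ Rpos)) {β : E} (hβ : β ∈ R) :
    posRep Rpos β ∈ Rpos := by
  unfold posRep
  split_ifs with h
  · exact h
  · exact ((hsplit β).1 hβ).resolve_left h

variable [Module ℚ E]

noncomputable def affTerm (Rpos : Finset E) (w : E ≃ₗ[ℚ] E) (lam : E →ₗ[ℚ] ℚ) (γ : E) : ℚ :=
  lam γ + if -(w γ) ∈ Rpos then 1 else 0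

theorem abs_map_posRep (lam : E →ₗ[ℚ] ℚ) (β : E) : |lam (posRep Rpos β)| = |lam β| := by
  unfold posRep
  split_ifs <;> simp

theorem injOn_posRep_comp (hdisj : ∀ α ∈ Rpos, -α ∉ Rpos) (u : E ≃ₗ[ℚ] E) :
    Set.InjOn (fun α => posRep Rpos (u α)) Rpos := by
  intro α hα α₁ hα₁ h
  have hsign : α = α₁ ∨ α = -α₁ := by
    simp only [posRep] at h
    split_ifs at h <;> simp_all [← map_neg, neg_eq_iff_eq_neg]
  rcases hsign with rfl | rfl
  · rfl
  · exact absurd hα (hdisj α₁ hα₁)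

theorem sum_posRep_comp {M : Type*} [AddCommMonoid M]
    (hsplit : ∀ α : E, α ∈ R ↔ (α ∈ Rpos ∨ -α ∈ Rpos)) (hdisj : ∀ α ∈ Rpos, -α ∉ Rpos)
    {u : E ≃ₗ[ℚ] E} (hu : ∀ α ∈ R, u α ∈ R) (f : E → M) :
    ∑ α ∈ Rpos, f (posRep Rpos (u α)) = ∑ α ∈ Rpos, f α := by
  have hmaps : Set.MapsTo (fun α => posRep Rpos (u α)) Rpos Rpos := fun α hα =>
    posRep_mem hsplit (hu α ((hsplit α).2 (Or.inl hα)))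
  exact sum_nbij _ hmaps (injOn_posRep_comp hdisj u)
    (surjOn_of_injOn_of_card_le _ hmaps (injOn_posRep_comp hdisj u) le_rfl) (fun _ _ => rfl)

theorem gfun_eq_abs_affTerm_add (w u : E ≃ₗ[ℚ] E) (lam : E →ₗ[ℚ] ℚ) (α : E)
    (hint : ∃ n : ℤ, lam (posRep Rpos (u α)) = n) :
    gfun Rpos RP w u lam α = |affTerm Rpos w lam (posRep Rpos (u α))| +
      (if α ∉ RP then 1 else 0) * (lam (u α) - (if -(u α) ∈ Rpos then 1 else 0)
        + (if -(w (u α)) ∈ Rpos then 1 else 0)) := by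
  have habs := abs_add_ite_of_int _ hint (-(w (posRep Rpos (u α))) ∈ Rpos)
  rw [abs_map_posRep] at habs
  rw [affTerm, habs]
  delta posRep
  by_cases hα : α ∈ RP
  · simp [gfun, hα]
  · simp only [gfun, hα, not_false_eq_true, ↓reduceIte, one_mul, true_and]
    ring

theorem sub_add_ite_eq_sign_mul_affTerm (hsplit : ∀ α : E, α ∈ R ↔ (α ∈ Rpos ∨ -α ∈ Rpos))
    (hdisj : ∀ α ∈ Rpos, -α ∉ Rpos) {w : E ≃ₗ[ℚ] E} (lam : E →ₗ[ℚ] ℚ) {β : E}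
    (hβ : β ∈ R) (hwβ : w β ∈ R) :
    lam β - (if -β ∈ Rpos then 1 else 0) + (if -(w β) ∈ Rpos then 1 else 0)
      = (if β ∈ Rpos then 1 else -1) * affTerm Rpos w lam (posRep Rpos β) := by
  by_cases hpos : β ∈ Rpos
  · simp [posRep, affTerm, hpos, hdisj β hpos]
  · have hneg : -β ∈ Rpos := ((hsplit β).1 hβ).resolve_left hpos
    simp only [posRep, affTerm, hpos, hneg, map_neg, neg_neg, if_true, if_false]
    rcases (hsplit (w β)).1 hwβ with h | h
    · simp only [hdisj _ h, ↓reduceIte, add_zero, h, neg_mul, one_mul, neg_add_rev, neg_neg]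
      ring
    · have h' : w β ∉ Rpos := fun h' => hdisj _ h' h
      simp [h, h']

theorem sum_ite_notMem_mul_eq_lenP (w u : E ≃ₗ[ℚ] E) (lam : E →ₗ[ℚ] ℚ) :
    ∑ α ∈ Rpos, (if α ∉ RP then 1 else 0) * (lam (u α) - (if -(u α) ∈ Rpos then 1 else 0)
        + (if -(w (u α)) ∈ Rpos then 1 else 0))
      = ∑ α ∈ Rpos \ RP, lam (u α) - (lenP Rpos RP u : ℚ) + (lenP Rpos RP (u.trans w) : ℚ) := by
  simp only [ite_mul, one_mul, zero_mul]
  rw [← sum_filter, ← sdiff_eq_filter, sum_add_distrib, sum_sub_distrib, lenP, lenP,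
    ← sum_boole, ← sum_boole]
  rfl

end RootSigns

theorem abs_add_ite_mul_sign_nonneg {K : Type*} [Ring K] [LinearOrder K] [IsOrderedRing K]
    (x : K) (p q : Prop) [Decidable p] [Decidable q] :
    0 ≤ |x| + (if p then 1 else 0) * ((if q then 1 else -1) * x) := by
  split_ifs <;> simp [add_comm |x|, add_abs_nonneg, le_abs_self]

theorem stmt2_general {E : Type*} [AddCommGroup E] [Module ℚ E] [DecidableEq E]
    (R Rpos RP : Finset E)
    (hsplit : ∀ α : E, α ∈ R ↔ (α ∈ Rpos ∨ -α ∈ Rpos))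
    (hdisj : ∀ α ∈ Rpos, -α ∉ Rpos)
    (w u : E ≃ₗ[ℚ] E)
    (hw : ∀ α ∈ R, w α ∈ R) (hu : ∀ α ∈ R, u α ∈ R)
    (lam : E →ₗ[ℚ] ℚ)
    (hlam : ∀ α ∈ R, ∃ n : ℤ, lam α = (n : ℚ)) :
    (affLen Rpos w lam - (lenP Rpos RP u : ℚ) + (lenP Rpos RP (u.trans w) : ℚ)
        + ∑ α ∈ Rpos \ RP, lam (u α)
      = ∑ α ∈ Rpos, gfun Rpos RP w u lam α) ∧
    (∀ α ∈ Rpos, 0 ≤ gfun Rpos RP w u lam α) := by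
  have hR : ∀ α ∈ Rpos, α ∈ R := fun α hα => (hsplit α).2 (Or.inl hα)
  have hg := fun α (hα : α ∈ Rpos) => gfun_eq_abs_affTerm_add (RP := RP) w u lam α
    (hlam _ (hR _ (posRep_mem hsplit (hu α (hR α hα)))))
  refine ⟨?_, fun α hα => ?_⟩
  · rw [sum_congr rfl hg, sum_add_distrib, sum_ite_notMem_mul_eq_lenP,
      sum_posRep_comp hsplit hdisj hu (fun γ => |affTerm Rpos w lam γ|)]
    simp only [affLen, affTerm]
    ring
  · have huα := hu α (hR α hα)
    rw [hg α hα, sub_add_ite_eq_sign_mul_affTerm hsplit hdisj lam huα (hw _ huα)]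
    exact abs_add_ite_mul_sign_nonneg _ _ _

/-- For `x = w t_λ ∈ 𝑊̃` and `u ∈ W`, one has
`ℓ(x) - ℓ_P(u) + ℓ_P(wu) + ⟨2ρ_P, u⁻¹(λ)⟩ = ∑_{α ∈ R⁺} g(α)`, and `g(α) ≥ 0` for
every `α ∈ R⁺`. -/
theorem stmt2 {E : Type*} [AddCommGroup E] [Module ℚ E] [DecidableEq E]
    (R Rpos RP : Finset E)
    (hspan : Submodule.span ℚ (R : Set E) = ⊤)
    (hsplit : ∀ α : E, α ∈ R ↔ (α ∈ Rpos ∨ -α ∈ Rpos))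
    (hdisj : ∀ α ∈ Rpos, -α ∉ Rpos)
    (hRP : RP ⊆ R) (hRPneg : ∀ α ∈ RP, -α ∈ RP)
    (w u : E ≃ₗ[ℚ] E)
    (hw : ∀ α ∈ R, w α ∈ R) (hu : ∀ α ∈ R, u α ∈ R)
    (lam : E →ₗ[ℚ] ℚ)
    (hlam : ∀ α ∈ R, ∃ n : ℤ, lam α = (n : ℚ)) :
    (affLen Rpos w lam - (lenP Rpos RP u : ℚ) + (lenP Rpos RP (u.trans w) : ℚ)
        + ∑ α ∈ Rpos \ RP, lam (u α)
      = ∑ α ∈ Rpos, gfun Rpos RP w u lam α) ∧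
    (∀ α ∈ Rpos, 0 ≤ gfun Rpos RP w u lam α) :=
  stmt2_general R Rpos RP hsplit hdisj w u hw hu lam hlam
end

section
/- Let $v, w \in W$ with $w(R_P) = R_P$, and let $\lambda \in \Lambda$. Then $\sum_{\alpha \in R^+ \setminus R_P^+} \langle v(\alpha), \lambda \rangle \equiv \sum_{\alpha \in R^+ \setminus R_P^+} \langle v w^{-1}(\alpha), \lambda \rangle \pmod{2}$. (In particular, writing $d_{u,\lambda} = \langle u(2\rho_P), \lambda \rangle$ with $2\rho_P = \sum_{\alpha \in R^+ \setminus R_P^+} \alpha$, one has $d_{v,\lambda} \equiv d_{vw^{-1},\lambda} \pmod 2$ for every element $w$ of the normalizer of $W_P$ in $W$.) -/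
/-!
Put `T = R⁺ \ R_P`. Every root of `R \ R_P` has exactly one of `±α` in `T`, and `w` permutes
`R \ R_P` and commutes with negation, so `w⁻¹ T` arises from `T` by replacing each root of
`T \ w⁻¹ T` with its negative. For the odd function `f = λ ∘ v` this gives
`∑_T f - ∑_{w⁻¹ T} f = 2 ∑_{T \ w⁻¹ T} f`, and the last sum is an integer.
-/

open Finset

lemma Finset.apply_mem_iff_of_mapsTo {α : Type*} {s : Finset α} {f : α → α}
    (hf : f.Injective) (hs : ∀ x ∈ s, f x ∈ s) {x : α} : f x ∈ s ↔ x ∈ s := by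
  refine ⟨fun hx ↦ ?_, hs x⟩
  have hbij : Set.BijOn f s s := (s.finite_toSet.injOn_iff_bijOn_of_mapsTo hs).mp hf.injOn
  obtain ⟨y, hy, hxy⟩ := hbij.surjOn hx
  exact hf hxy ▸ hy

section

variable {E : Type*} [AddCommGroup E] [DecidableEq E]

lemma Finset.sum_sub_sum_eq_two_nsmul_sum_sdiff {M : Type*} [AddCommGroup M] {f : E → M}
    (hf : ∀ x, f (-x) = -f x) {S T : Finset E} (h : S \ T = (T \ S).image Neg.neg) :
    ∑ x ∈ T, f x - ∑ x ∈ S, f x = 2 • ∑ x ∈ T \ S, f x := by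
  rw [← sum_sdiff_sub_sum_sdiff, h, sum_image neg_injective.injOn]
  simp [hf, two_nsmul]

lemma Finset.image_symm_sdiff_eq_image_neg {A : Set E} {T : Finset E} (hTA : ∀ x ∈ T, x ∈ A)
    (hT : ∀ x ∈ A, x ∈ T ↔ -x ∉ T) (g : E ≃+ E) (hg : ∀ x, g x ∈ A ↔ x ∈ A) :
    T.image g.symm \ T = (T \ T.image g.symm).image Neg.neg := by
  have hmem : ∀ x, x ∈ T.image g.symm ↔ g x ∈ T := fun x ↦ by
    simp [mem_image, g.symm_apply_eq]
  ext x
  simp only [mem_sdiff, hmem, mem_image, neg_eq_iff_eq_neg, exists_eq_right, map_neg]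
  constructor
  · rintro ⟨hgx, hx⟩
    have hxA : x ∈ A := (hg x).mp (hTA _ hgx)
    exact ⟨by simpa [hx] using (hT x hxA).not, (hT _ (hTA _ hgx)).mp hgx⟩
  · rintro ⟨hx, hgx⟩
    have hgxA : -g x ∈ A := by rw [← map_neg, hg]; exact hTA _ hx
    exact ⟨by simpa using (hT _ hgxA).not.mp hgx, by simpa using (hT _ (hTA _ hx)).mp hx⟩

lemma mem_sdiff_iff_neg_notMem_sdiff {R Rpos RP : Finset E}
    (hsplit : ∀ α : E, α ∈ R ↔ (α ∈ Rpos ∨ -α ∈ Rpos)) (hdisj : ∀ α ∈ Rpos, -α ∉ Rpos)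
    (hRPneg : ∀ α ∈ RP, -α ∈ RP) {x : E} (hx : x ∈ R) (hxP : x ∉ RP) :
    x ∈ Rpos \ RP ↔ -x ∉ Rpos \ RP := by
  have hnegP : -x ∉ RP := fun h ↦ hxP (by simpa using hRPneg _ h)
  simp only [mem_sdiff, hxP, hnegP, not_false_eq_true, and_true]
  exact ⟨hdisj x, ((hsplit x).mp hx).resolve_right⟩

end

theorem stmt4_general {E : Type*} [AddCommGroup E] [Module ℚ E] [DecidableEq E]
    (R Rpos RP : Finset E)
    (hsplit : ∀ α : E, α ∈ R ↔ (α ∈ Rpos ∨ -α ∈ Rpos))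
    (hdisj : ∀ α ∈ Rpos, -α ∉ Rpos)
    (hRPneg : ∀ α ∈ RP, -α ∈ RP)
    (v w : E ≃ₗ[ℚ] E)
    (hv : ∀ α ∈ R, v α ∈ R) (hw : ∀ α ∈ R, w α ∈ R)
    (hwRP : ∀ α : E, α ∈ RP ↔ w α ∈ RP)
    (lam : E →ₗ[ℚ] ℚ)
    (hlam : ∀ α ∈ R, ∃ n : ℤ, lam α = (n : ℚ)) :
    ∃ m : ℤ,
      (∑ α ∈ Rpos \ RP, lam (v α)) - (∑ α ∈ Rpos \ RP, lam (v (w.symm α)))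
        = 2 * (m : ℚ) := by
  set T := Rpos \ RP
  set S := T.image w.toAddEquiv.symm
  have hTR : ∀ x ∈ T, x ∈ R := fun x hx ↦ (hsplit x).mpr (.inl (mem_sdiff.mp hx).1)
  have hST : S \ T = (T \ S).image Neg.neg := by
    refine image_symm_sdiff_eq_image_neg (A := ↑R \ ↑RP)
      (fun x hx ↦ ⟨hTR x hx, (mem_sdiff.mp hx).2⟩)
      (fun x hx ↦ mem_sdiff_iff_neg_notMem_sdiff hsplit hdisj hRPneg hx.1 hx.2) _ fun x ↦ ?_
    simp [apply_mem_iff_of_mapsTo w.injective hw, ← hwRP]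
  obtain ⟨n, hn⟩ : ∑ x ∈ T \ S, lam (v x) ∈ (Int.castAddHom ℚ).range :=
    AddSubgroup.sum_mem _ fun x hx ↦ by
      obtain ⟨n, hn⟩ := hlam _ (hv x (hTR x (mem_sdiff.mp hx).1))
      exact ⟨n, by simp [hn]⟩
  refine ⟨n, ?_⟩
  have hsum := sum_sub_sum_eq_two_nsmul_sum_sdiff (f := fun x ↦ lam (v x)) (by simp) hST
  rw [← hn, sum_image fun _ _ _ _ h ↦ w.toAddEquiv.symm.injective h] at hsum
  simpa [two_nsmul, two_mul] using hsum

theorem stmt4 {E : Type*} [AddCommGroup E] [Module ℚ E] [DecidableEq E]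
    (R Rpos RP : Finset E)
    (hspan : Submodule.span ℚ (R : Set E) = ⊤)
    (hsplit : ∀ α : E, α ∈ R ↔ (α ∈ Rpos ∨ -α ∈ Rpos))
    (hdisj : ∀ α ∈ Rpos, -α ∉ Rpos)
    (hRP : RP ⊆ R) (hRPneg : ∀ α ∈ RP, -α ∈ RP)
    (v w : E ≃ₗ[ℚ] E)
    (hv : ∀ α ∈ R, v α ∈ R) (hw : ∀ α ∈ R, w α ∈ R)
    (hwRP : ∀ α : E, α ∈ RP ↔ w α ∈ RP)
    (lam : E →ₗ[ℚ] ℚ)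
    (hlam : ∀ α ∈ R, ∃ n : ℤ, lam α = (n : ℚ)) :
    ∃ m : ℤ,
      (∑ α ∈ Rpos \ RP, lam (v α)) - (∑ α ∈ Rpos \ RP, lam (v (w.symm α)))
        = 2 * (m : ℚ) :=
  stmt4_general R Rpos RP hsplit hdisj hRPneg v w hv hw hwRP lam hlam
end
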